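/- arXiv:2111.02824 — 2 statements merged into one kernel-verified Lean document; each statement's English description precedes it below -/
import Mathlib

section
/- An LFSA S is not E_f-predictable if and only if in the self-composition CC(S_n, S_n) of the normal subautomaton there exists a run q0' →s1' q1' from an initial state q0' such that (a) in S there is a transition (q1'(L), e_f, q) for some faulty event e_f ∈ E_f and some state q, and (b) in S_n there is a transition cycle reachable from q1'(R). -/
/-- A labeled finite-state automaton (LFSA): transition relation `δ`,
initial states `Q0`, labeling `lab` (where `none` stands for ε, i.e. unobservable). -/
structure LFSA (Q : Type*) (E : Type*) (A : Type*) where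
  δ : Q → E → Q → Prop
  Q0 : Set Q
  lab : E → Option A

namespace LFSA

variable {Q Q1 Q2 E A : Type*}

/-- A run `q →s q'` over a finite event sequence. -/
inductive Run (S : LFSA Q E A) : Q → List E → Q → Prop
  | nil (q : Q) : Run S q [] q
  | cons {q q' q'' : Q} {e : E} {s : List E} :
      S.δ q e q' → Run S q' s q'' → Run S q (e :: s) q''

/-- Output (label sequence) of an event sequence. -/
def out (S : LFSA Q E A) (s : List E) : List A := s.filterMap S.lab

/-- Generated finite language. -/
def L (S : LFSA Q E A) : Set (List E) := {s | ∃ q0 ∈ S.Q0, ∃ q, S.Run q0 s q}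

/-- Current-state estimate after observing `σ`. -/
def M (S : LFSA Q E A) (σ : List A) : Set Q :=
  {q | ∃ q0 ∈ S.Q0, ∃ s : List E, S.out s = σ ∧ S.Run q0 s q}

/-- Reachability via a nonempty event sequence. -/
def ReachPlus (S : LFSA Q E A) (q q' : Q) : Prop := ∃ s : List E, s ≠ [] ∧ S.Run q s q'

/-- There is a transition cycle reachable from `q` (a cycle at `q` itself counts). -/
def CycleReachableFrom (S : LFSA Q E A) (q : Q) : Prop :=
  ∃ p : Q, (p = q ∨ S.ReachPlus q p) ∧ ∃ s : List E, s ≠ [] ∧ S.Run p s p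

/-- `*`-strong detectability. -/
def StarSD (S : LFSA Q E A) : Prop :=
  ∃ k : ℕ, 0 < k ∧ ∀ s ∈ S.L, ∀ σ : List A, σ <+: S.out s → k < σ.length →
    ∃ q : Q, S.M σ = {q}

/-- ω-strong detectability. -/
def OmegaSD (S : LFSA Q E A) : Prop :=
  ∃ k : ℕ, 0 < k ∧ ∀ (s : ℕ → E) (ρ : ℕ → Q), ρ 0 ∈ S.Q0 →
    (∀ n : ℕ, S.δ (ρ n) (s n) (ρ (n + 1))) →
    ∀ (n : ℕ) (σ : List A), σ <+: S.out (List.ofFn (fun i : Fin n => s i)) →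
      k < σ.length → ∃ q : Q, S.M σ = {q}

/-- Concurrent composition: observable transitions with equal labels synchronize,
unobservable transitions interleave. Events are pairs over `Option E` (`none` = ε). -/
def CC (S1 : LFSA Q1 E A) (S2 : LFSA Q2 E A) :
    LFSA (Q1 × Q2) (Option E × Option E) A where
  δ p ev p' :=
    match ev with
    | (some e, some e') =>
        (∃ a : A, S1.lab e = some a ∧ S2.lab e' = some a) ∧
          S1.δ p.1 e p'.1 ∧ S2.δ p.2 e' p'.2
    | (some e, none) => S1.lab e = none ∧ S1.δ p.1 e p'.1 ∧ p.2 = p'.2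
    | (none, some e') => S2.lab e' = none ∧ p.1 = p'.1 ∧ S2.δ p.2 e' p'.2
    | (none, none) => False
  Q0 := {p | p.1 ∈ S1.Q0 ∧ p.2 ∈ S2.Q0}
  lab ev := ev.1.bind S1.lab

/-- Left projection of an event sequence of a concurrent composition. -/
def lproj (s : List (Option E × Option E)) : List E := s.filterMap Prod.fst

/-- Right projection of an event sequence of a concurrent composition. -/
def rproj (s : List (Option E × Option E)) : List E := s.filterMap Prod.snd

/-- Unobservable reach of a set of states. -/
def UR (S : LFSA Q E A) (X : Set Q) : Set Q :=
  {q | ∃ q0 ∈ X, ∃ s : List E, S.out s = [] ∧ S.Run q0 s q}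

/-- One step of the observer (powerset construction). -/
def obsStep (S : LFSA Q E A) (x : Set Q) (a : A) : Set Q :=
  {q' | ∃ q ∈ x, ∃ (e : E) (p : Q), S.lab e = some a ∧ S.δ q e p ∧ q' ∈ S.UR {p}}

/-- Observer run (deterministic). -/
def obsRun (S : LFSA Q E A) (x : Set Q) (σ : List A) : Set Q := σ.foldl S.obsStep x

/-- The concurrent composition `CC(S_ε, Obs^ε)` of `S` (with events relabeled by their
labels) and a deterministic observer with step function `ostep` and initial state `x0`:
observable transitions move both components, unobservable ones move only the left one. -/
def CCObs (S : LFSA Q E A) (ostep : Set Q → A → Set Q) (x0 : Set Q) :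
    LFSA (Q × Set Q) E A where
  δ p e p' := S.δ p.1 e p'.1 ∧
    (∀ a : A, S.lab e = some a → p'.2 = ostep p.2 a) ∧
    (S.lab e = none → p'.2 = p.2)
  Q0 := {p | p.1 ∈ S.Q0 ∧ p.2 = x0}
  lab := S.lab

/-- A state is reachable if it is an initial state or reachable from one. -/
def Reachable (S : LFSA Q E A) (q : Q) : Prop := ∃ q0 ∈ S.Q0, ∃ s : List E, S.Run q0 s q

/-- Restriction of an automaton to a set of allowed states. -/
def restrict (S : LFSA Q E A) (P : Set Q) : LFSA Q E A where
  δ q e q' := S.δ q e q' ∧ q ∈ P ∧ q' ∈ P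
  Q0 := S.Q0 ∩ P
  lab := S.lab

/-- A run all of whose states (including endpoints) lie in `P`. -/
inductive RunIn (S : LFSA Q E A) (P : Set Q) : Q → List E → Q → Prop
  | nil (q : Q) : q ∈ P → RunIn S P q [] q
  | cons {q q' q'' : Q} {e : E} {s : List E} :
      q ∈ P → S.δ q e q' → RunIn S P q' s q'' → RunIn S P q (e :: s) q''

/-- Normal subautomaton: all faulty transitions removed. -/
def Sn (S : LFSA Q E A) (Ef : Set E) : LFSA Q E A where
  δ q e q' := S.δ q e q' ∧ e ∉ Ef
  Q0 := S.Q0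
  lab := S.lab

/-- Faulty subautomaton: faulty transitions together with all their
predecessor and successor transitions. -/
def Sf (S : LFSA Q E A) (Ef : Set E) : LFSA Q E A where
  δ q e q' := S.δ q e q' ∧ ∃ c f d, f ∈ Ef ∧ S.δ c f d ∧
      ((q = c ∧ e = f ∧ q' = d) ∨ (c = q' ∨ S.ReachPlus q' c) ∨ (q = d ∨ S.ReachPlus d q))
  Q0 := S.Q0
  lab := S.lab

/-- `s` ends with a faulty event. -/
def EndsFaulty (Ef : Set E) (s : List E) : Prop := ∃ (t : List E) (e : E), e ∈ Ef ∧ s = t ++ [e]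

/-- `E_f`-diagnosability. -/
def Diag (S : LFSA Q E A) (Ef : Set E) : Prop :=
  ∃ k : ℕ, ∀ s ∈ S.L, EndsFaulty Ef s → ∀ s' : List E, s ++ s' ∈ S.L → k < s'.length →
    ∀ s'' ∈ S.L, S.out s'' = S.out (s ++ s') → ∃ e ∈ Ef, e ∈ s''

/-- `E_f`-predictability. -/
def Pred (S : LFSA Q E A) (Ef : Set E) : Prop :=
  ∃ k : ℕ, ∀ s ∈ S.L, EndsFaulty Ef s →
    ∃ s' : List E, s' <+: s ∧ (∀ e ∈ s', e ∉ Ef) ∧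
      ∀ u v : List E, u ++ v ∈ S.L → S.out s' = S.out u → (∀ e ∈ u, e ∉ Ef) →
        k < v.length → ∃ e ∈ Ef, e ∈ v

/-- Current-state opacity. -/
def CSO (S : LFSA Q E A) (QS : Set Q) : Prop :=
  ∀ q0 ∈ S.Q0, ∀ (s : List E) (q : Q), S.Run q0 s q → q ∈ QS →
    ∃ q0' ∈ S.Q0, ∃ (s' : List E) (q' : Q), S.Run q0' s' q' ∧ q' ∉ QS ∧ S.out s = S.out s'

/-- Initial-state opacity. -/
def ISO (S : LFSA Q E A) (QS : Set Q) : Prop :=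
  ∀ q0 ∈ S.Q0 ∩ QS, ∀ (s : List E) (q : Q), S.Run q0 s q →
    ∃ q0' ∈ S.Q0 \ QS, ∃ (s' : List E) (q' : Q), S.Run q0' s' q' ∧ S.out s = S.out s'

/-- Infinite-step opacity. -/
def InfSO (S : LFSA Q E A) (QS : Set Q) : Prop :=
  ∀ q0 ∈ S.Q0, ∀ (s1 : List E) (q1 : Q) (s2 : List E) (q2 : Q),
    S.Run q0 s1 q1 → S.Run q1 s2 q2 → q1 ∈ QS →
    ∃ q0' ∈ S.Q0, ∃ (s1' : List E) (q1' : Q) (s2' : List E) (q2' : Q),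
      S.Run q0' s1' q1' ∧ S.Run q1' s2' q2' ∧ q1' ∉ QS ∧
        S.out s1 = S.out s1' ∧ S.out s2 = S.out s2'

/-- `K`-step opacity. -/
def KSO (S : LFSA Q E A) (QS : Set Q) (K : ℕ) : Prop :=
  ∀ q0 ∈ S.Q0, ∀ (s1 : List E) (q1 : Q) (s2 : List E) (q2 : Q),
    S.Run q0 s1 q1 → S.Run q1 s2 q2 → q1 ∈ QS → (S.out s2).length ≤ K →
    ∃ q0' ∈ S.Q0, ∃ (s1' : List E) (q1' : Q) (s2' : List E) (q2' : Q),
      S.Run q0' s1' q1' ∧ S.Run q1' s2' q2' ∧ q1' ∉ QS ∧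
        S.out s1 = S.out s1' ∧ S.out s2 = S.out s2'

/-- Strong current-state opacity: the matching run is entirely non-secret. -/
def SCSO (S : LFSA Q E A) (QS : Set Q) : Prop :=
  ∀ q0 ∈ S.Q0, ∀ (s : List E) (q : Q), S.Run q0 s q → q ∈ QS →
    ∃ q0' ∈ S.Q0, ∃ (s' : List E) (q' : Q), S.RunIn QSᶜ q0' s' q' ∧ S.out s = S.out s'

/-- Strong initial-state opacity. -/
def SISO (S : LFSA Q E A) (QS : Set Q) : Prop :=
  ∀ q0 ∈ S.Q0 ∩ QS, ∀ (s : List E) (q : Q), S.Run q0 s q →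
    ∃ q0' ∈ S.Q0 \ QS, ∃ (s' : List E) (q' : Q), S.RunIn QSᶜ q0' s' q' ∧ S.out s = S.out s'

/-- Strong infinite-step opacity. -/
def SInfSO (S : LFSA Q E A) (QS : Set Q) : Prop :=
  ∀ q0 ∈ S.Q0, ∀ (s1 : List E) (q1 : Q) (s2 : List E) (q2 : Q),
    S.Run q0 s1 q1 → S.Run q1 s2 q2 → q1 ∈ QS →
    ∃ q0' ∈ S.Q0, ∃ (s1' : List E) (q1' : Q) (s2' : List E) (q2' : Q),
      S.RunIn QSᶜ q0' s1' q1' ∧ S.RunIn QSᶜ q1' s2' q2' ∧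
        S.out s1 = S.out s1' ∧ S.out s2 = S.out s2'

/-- Strong `K`-step opacity. -/
def SKSO (S : LFSA Q E A) (QS : Set Q) (K : ℕ) : Prop :=
  ∀ q0 ∈ S.Q0, ∀ (s1 : List E) (q1 : Q) (s2 : List E) (q2 : Q),
    S.Run q0 s1 q1 → S.Run q1 s2 q2 → q1 ∈ QS → (S.out s2).length ≤ K →
    ∃ q0' ∈ S.Q0, ∃ (s1' : List E) (q1' : Q) (s2' : List E) (q2' : Q),
      S.RunIn QSᶜ q0' s1' q1' ∧ S.RunIn QSᶜ q1' s2' q2' ∧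
        S.out s1 = S.out s1' ∧ S.out s2 = S.out s2'

/-- Observer step of the secret-deleted subautomaton `S_dss`. -/
def dssObsStep (S : LFSA Q E A) (QS : Set Q) : Set Q → A → Set Q :=
  (S.restrict QSᶜ).obsStep

/-- Initial observer state of the secret-deleted subautomaton. -/
def dssInit (S : LFSA Q E A) (QS : Set Q) : Set Q :=
  (S.restrict QSᶜ).UR (S.restrict QSᶜ).Q0

end LFSA

/-! Non-predictability yields a fault-free prefix `t₀` after which a fault is possible, and a
fault-free run `u`, observationally equal to `t₀`, with a fault-free continuation longer than
`|Q|`. Pairing `t₀` with `u` gives a run of `CC(S_n, S_n)`, and by pigeonhole the long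
continuation passes through a cycle of `S_n`. Conversely, every fault-free prefix of the left
projection followed by the fault is matched, observation for observation, by a prefix of the
right projection, and pumping the cycle extends it by fault-free continuations of any length. -/

namespace LFSA

variable {Q Q1 Q2 E A : Type*}

section Runs

variable {S : LFSA Q E A}

theorem Run.append {q q' q'' : Q} {t u : List E} (h₁ : S.Run q t q') (h₂ : S.Run q' u q'') :
    S.Run q (t ++ u) q'' := by
  induction h₁ with
  | nil => exact h₂
  | cons hδ _ ih => exact .cons hδ (ih h₂)

theorem Run.exists_of_append {q q'' : Q} {t u : List E} (h : S.Run q (t ++ u) q'') :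
    ∃ q', S.Run q t q' ∧ S.Run q' u q'' := by
  induction t generalizing q with
  | nil => exact ⟨q, .nil q, h⟩
  | cons e t ih =>
    cases h with
    | cons hδ h =>
      obtain ⟨q', h₁, h₂⟩ := ih h
      exact ⟨q', .cons hδ h₁, h₂⟩

theorem Run.exists_length_gt_of_cycle {p : Q} {c : List E} (hc : c ≠ []) (h : S.Run p c p)
    (k : ℕ) : ∃ c', k < c'.length ∧ S.Run p c' p := by
  induction k with
  | zero => exact ⟨c, List.length_pos_iff.mpr hc, h⟩
  | succ k ih =>
    obtain ⟨c', hlen, h'⟩ := ih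
    have hpos : 0 < c.length := List.length_pos_iff.mpr hc
    exact ⟨c' ++ c, by simp only [List.length_append]; omega, h'.append h⟩

theorem reachPlus_of_δ {q q₁ p : Q} {e : E} (hδ : S.δ q e q₁) (hp : p = q₁ ∨ S.ReachPlus q₁ p) :
    S.ReachPlus q p := by
  rcases hp with rfl | ⟨s, -, hs⟩
  · exact ⟨[e], List.cons_ne_nil _ _, .cons hδ (.nil p)⟩
  · exact ⟨e :: s, List.cons_ne_nil _ _, .cons hδ hs⟩

theorem CycleReachableFrom.of_δ {q q₁ : Q} {e : E} (hδ : S.δ q e q₁)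
    (h : S.CycleReachableFrom q₁) : S.CycleReachableFrom q :=
  let ⟨p, hp, hcycle⟩ := h
  ⟨p, .inr (reachPlus_of_δ hδ hp), hcycle⟩

/-- Pigeonhole, with `V` the set of states already visited. -/
theorem reaches_or_cycleReachableFrom_of_run [Fintype Q] {q q' : Q} {s : List E}
    (h : S.Run q s q') (V : Finset Q) (hlen : Fintype.card Q < s.length + V.card) :
    (∃ p ∈ V, p = q ∨ S.ReachPlus q p) ∨ S.CycleReachableFrom q := by
  classical
  induction h generalizing V with
  | nil q => exact absurd (V.card_le_univ) (by simpa using hlen)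
  | @cons q q₁ _ e s hδ _ ih =>
    by_cases hq : q ∈ V
    · exact .inl ⟨q, hq, .inl rfl⟩
    have hlen' : Fintype.card Q < s.length + (insert q V).card := by
      rw [Finset.card_insert_of_notMem hq]
      simp only [List.length_cons] at hlen
      omega
    rcases ih (insert q V) hlen' with ⟨p, hpV, hp⟩ | hcycle
    · rcases Finset.mem_insert.mp hpV with rfl | hpV
      · obtain ⟨c, hc, hcycle⟩ := reachPlus_of_δ hδ hp
        exact .inr ⟨p, .inl rfl, c, hc, hcycle⟩
      · exact .inl ⟨p, hpV, .inr (reachPlus_of_δ hδ hp)⟩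
    · exact .inr (.of_δ hδ hcycle)

theorem cycleReachableFrom_of_card_lt_length [Fintype Q] {q q' : Q} {s : List E}
    (h : S.Run q s q') (hs : Fintype.card Q < s.length) : S.CycleReachableFrom q := by
  simpa using reaches_or_cycleReachableFrom_of_run h ∅ (by simpa using hs)

theorem CycleReachableFrom.exists_run_length_gt {q : Q} (h : S.CycleReachableFrom q) (k : ℕ) :
    ∃ (v : List E) (q' : Q), k < v.length ∧ S.Run q v q' := by
  obtain ⟨p, hp, c, hc, hcycle⟩ := h
  obtain ⟨u, hu⟩ : ∃ u, S.Run q u p := by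
    rcases hp with rfl | ⟨u, -, hu⟩
    · exact ⟨[], .nil _⟩
    · exact ⟨u, hu⟩
  obtain ⟨c', hlen, hc'⟩ := hcycle.exists_length_gt_of_cycle hc k
  exact ⟨u ++ c', p, by simp only [List.length_append]; omega, hu.append hc'⟩

end Runs

theorem run_sn_iff {S : LFSA Q E A} {Ef : Set E} {q q' : Q} {t : List E} :
    (S.Sn Ef).Run q t q' ↔ S.Run q t q' ∧ ∀ e ∈ t, e ∉ Ef := by
  constructor
  · intro h
    induction h with
    | nil => exact ⟨.nil _, by simp⟩
    | cons hδ _ ih => exact ⟨.cons hδ.1 ih.1, by simpa [hδ.2] using ih.2⟩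
  · rintro ⟨h, hff⟩
    induction h with
    | nil => exact .nil _
    | cons hδ _ ih =>
      simp only [List.mem_cons, forall_eq_or_imp] at hff
      exact .cons ⟨hδ, hff.1⟩ (ih hff.2)

theorem Run.exists_split_observable {S : LFSA Q E A} {p p' : Q} {u : List E} {a : A}
    {σ : List A} (h : S.Run p u p') (hu : S.out u = a :: σ) :
    ∃ r r' e, (∃ u₁, S.Run p u₁ r ∧ S.out u₁ = []) ∧ S.δ r e r' ∧ S.lab e = some a ∧
      ∃ u₂, S.Run r' u₂ p' ∧ S.out u₂ = σ := by
  induction h with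
  | nil => simp [out] at hu
  | @cons p q₁ _ e u hδ hrun ih =>
    cases hl : S.lab e with
    | none =>
      obtain ⟨r, r', e', ⟨u₁, hu₁, hout₁⟩, h⟩ := ih (by simpa [out, hl] using hu)
      exact ⟨r, r', e', ⟨e :: u₁, .cons hδ hu₁, by simpa [out, hl] using hout₁⟩, h⟩
    | some b =>
      obtain ⟨rfl, hσ⟩ : b = a ∧ S.out u = σ := by simpa [out, hl] using hu
      exact ⟨p, q₁, e, ⟨[], .nil p, rfl⟩, hδ, hl, u, hrun, hσ⟩

section Composition

variable {S₁ : LFSA Q1 E A} {S₂ : LFSA Q2 E A}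

theorem exists_run_cc_of_out_eq_nil {q : Q1} {p p' : Q2} {u : List E} (h : S₂.Run p u p')
    (hu : S₂.out u = []) : ∃ w, (S₁.CC S₂).Run (q, p) w (q, p') := by
  induction h with
  | nil => exact ⟨[], .nil _⟩
  | @cons _ _ _ e _ hδ _ ih =>
    obtain ⟨hl, hu⟩ : S₂.lab e = none ∧ S₂.out _ = [] := by simpa [out] using hu
    obtain ⟨w, hw⟩ := ih hu
    refine ⟨(none, some e) :: w, .cons ?_ hw⟩
    exact ⟨hl, rfl, hδ⟩

theorem exists_run_cc_of_out_eq {q₀ q₁ : Q1} {p₀ p₁ : Q2} {t u : List E}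
    (h₁ : S₁.Run q₀ t q₁) (h₂ : S₂.Run p₀ u p₁) (hout : S₁.out t = S₂.out u) :
    ∃ w, (S₁.CC S₂).Run (q₀, p₀) w (q₁, p₁) := by
  induction h₁ generalizing p₀ u with
  | nil => exact exists_run_cc_of_out_eq_nil h₂ hout.symm
  | @cons q₀ q' _ e t hδ _ ih =>
    cases hl : S₁.lab e with
    | none =>
      obtain ⟨w, hw⟩ := ih h₂ (by simpa [out, hl] using hout)
      refine ⟨(some e, none) :: w, .cons ?_ hw⟩
      exact ⟨hl, hδ, rfl⟩
    | some a =>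
      obtain ⟨r, r', e', ⟨u₁, hu₁, hout₁⟩, hδ', hl', u₂, hu₂, hout₂⟩ :=
        h₂.exists_split_observable (by simpa [out, hl] using hout.symm)
      obtain ⟨w₁, hw₁⟩ := exists_run_cc_of_out_eq_nil (S₁ := S₁) (q := q₀) hu₁ hout₁
      obtain ⟨w₂, hw₂⟩ := ih hu₂ hout₂.symm
      exact ⟨w₁ ++ (some e, some e') :: w₂, hw₁.append (.cons ⟨⟨a, hl, hl'⟩, hδ, hδ'⟩ hw₂)⟩

theorem Run.cc_proj {p p' : Q1 × Q2} {w : List (Option E × Option E)}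
    (h : (S₁.CC S₂).Run p w p') :
    S₁.Run p.1 (lproj w) p'.1 ∧ S₂.Run p.2 (rproj w) p'.2 ∧
      S₁.out (lproj w) = S₂.out (rproj w) := by
  induction h with
  | nil => exact ⟨.nil _, .nil _, rfl⟩
  | @cons _ _ _ ev _ hδ _ ih =>
    obtain ⟨ih₁, ih₂, ih₃⟩ := ih
    rcases ev with ⟨_ | e, _ | e'⟩
    · exact hδ.elim
    · obtain ⟨hl, heq, hδ₂⟩ := hδ
      exact ⟨by simpa [lproj, heq] using ih₁, by simpa [rproj] using Run.cons hδ₂ ih₂,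
        by simpa [lproj, rproj, out, hl] using ih₃⟩
    · obtain ⟨hl, hδ₁, heq⟩ := hδ
      exact ⟨by simpa [lproj] using Run.cons hδ₁ ih₁, by simpa [rproj, heq] using ih₂,
        by simpa [lproj, rproj, out, hl] using ih₃⟩
    · obtain ⟨⟨a, hl₁, hl₂⟩, hδ₁, hδ₂⟩ := hδ
      exact ⟨by simpa [lproj] using Run.cons hδ₁ ih₁, by simpa [rproj] using Run.cons hδ₂ ih₂,
        by simpa [lproj, rproj, out, hl₁, hl₂] using ih₃⟩

end Composition

theorem exists_eq_append_lproj_eq {s : List E} {w : List (Option E × Option E)}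
    (hs : s <+: lproj w) : ∃ w₁ w₂, w = w₁ ++ w₂ ∧ lproj w₁ = s := by
  induction w generalizing s with
  | nil => exact ⟨[], [], rfl, (List.prefix_nil.mp hs).symm⟩
  | cons x w ih =>
    rcases s with _ | ⟨a, s⟩
    · exact ⟨[], x :: w, rfl, rfl⟩
    rcases x with ⟨_ | e, y⟩
    · obtain ⟨w₁, w₂, rfl, h⟩ := ih (by simpa [lproj] using hs)
      exact ⟨(none, y) :: w₁, w₂, rfl, by simpa [lproj] using h⟩
    · obtain ⟨rfl, hs'⟩ := List.cons_prefix_cons.mp (by simpa [lproj] using hs)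
      obtain ⟨w₁, w₂, rfl, h⟩ := ih hs'
      exact ⟨(some a, y) :: w₁, w₂, rfl, by simpa [lproj] using h⟩

theorem exists_eq_append_first_fault {Ef : Set E} {s : List E} {e : E} (he : e ∈ s)
    (hef : e ∈ Ef) : ∃ t f r, s = t ++ f :: r ∧ f ∈ Ef ∧ ∀ x ∈ t, x ∉ Ef := by
  classical
  obtain ⟨f, hfind⟩ := Option.isSome_iff_exists.mp
    (List.find?_isSome.mpr ⟨e, he, decide_eq_true hef⟩ : (s.find? (· ∈ Ef)).isSome)
  obtain ⟨hf, t, r, rfl, ht⟩ := List.find?_eq_some_iff_append.mp hfind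
  exact ⟨t, f, r, rfl, of_decide_eq_true hf, fun x hx => by simpa using ht x hx⟩

theorem exists_cc_run_of_not_pred [Fintype Q] {S : LFSA Q E A} {Ef : Set E} (hnp : ¬ S.Pred Ef) :
    ∃ q0' ∈ ((S.Sn Ef).CC (S.Sn Ef)).Q0,
      ∃ (q1' : Q × Q) (s1' : List (Option E × Option E)),
        ((S.Sn Ef).CC (S.Sn Ef)).Run q0' s1' q1' ∧
        (∃ ef ∈ Ef, ∃ q : Q, S.δ q1'.1 ef q) ∧
        (S.Sn Ef).CycleReachableFrom q1'.2 := by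
  unfold Pred at hnp
  push Not at hnp
  obtain ⟨s, ⟨q₀, hq₀, q, hrun⟩, ⟨t, ef₀, hef₀, rfl⟩, hbad⟩ := hnp (Fintype.card Q)
  obtain ⟨t₀, ef, r, hs, hef, ht₀⟩ :=
    exists_eq_append_first_fault (List.mem_append_right t (List.mem_singleton_self ef₀)) hef₀
  rw [hs] at hrun
  obtain ⟨q₁, hrun₀, hrun₁⟩ := hrun.exists_of_append
  obtain ⟨q₂, hδ⟩ : ∃ q₂, S.δ q₁ ef q₂ := by
    cases hrun₁ with
    | cons hδ _ => exact ⟨_, hδ⟩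
  obtain ⟨u, v, ⟨p₀, hp₀, p, huv⟩, hout, hu, hlen, hv⟩ := hbad t₀ ⟨ef :: r, hs.symm⟩ ht₀
  obtain ⟨p₁, hrunu, hrunv⟩ := huv.exists_of_append
  obtain ⟨w, hw⟩ :=
    exists_run_cc_of_out_eq (run_sn_iff.mpr ⟨hrun₀, ht₀⟩) (run_sn_iff.mpr ⟨hrunu, hu⟩) hout
  refine ⟨(q₀, p₀), ⟨hq₀, hp₀⟩, (q₁, p₁), w, hw, ⟨ef, hef, q₂, hδ⟩, ?_⟩
  exact cycleReachableFrom_of_card_lt_length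
    (run_sn_iff.mpr ⟨hrunv, fun e he hef => hv e hef he⟩) hlen

theorem not_pred_of_exists_cc_run {S : LFSA Q E A} {Ef : Set E}
    (h : ∃ q0' ∈ ((S.Sn Ef).CC (S.Sn Ef)).Q0,
      ∃ (q1' : Q × Q) (s1' : List (Option E × Option E)),
        ((S.Sn Ef).CC (S.Sn Ef)).Run q0' s1' q1' ∧
        (∃ ef ∈ Ef, ∃ q : Q, S.δ q1'.1 ef q) ∧
        (S.Sn Ef).CycleReachableFrom q1'.2) :
    ¬ S.Pred Ef := by
  rintro ⟨k, hk⟩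
  obtain ⟨⟨a₀, b₀⟩, ⟨ha₀, hb₀⟩, ⟨qL, qR⟩, w, hw, ⟨ef, hef, q, hδ⟩, hcycle⟩ := h
  obtain ⟨hL, -⟩ := run_sn_iff.mp hw.cc_proj.1
  obtain ⟨s', hs', hs'ff, hpred⟩ :=
    hk (lproj w ++ [ef]) ⟨a₀, ha₀, q, hL.append (.cons hδ (.nil q))⟩ ⟨_, ef, hef, rfl⟩
  have hs'w : s' <+: lproj w :=
    (List.prefix_concat_iff.mp hs').resolve_left fun h => hs'ff ef (by simp [h]) hef
  obtain ⟨w₁, w₂, rfl, hw₁⟩ := exists_eq_append_lproj_eq hs'w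
  obtain ⟨m, hm₁, hm₂⟩ := hw.exists_of_append
  obtain ⟨-, hu, hout⟩ := hm₁.cc_proj
  obtain ⟨v₁, q', hlen, hv₁⟩ := hcycle.exists_run_length_gt k
  obtain ⟨huv, huvff⟩ := run_sn_iff.mp (hu.append (hm₂.cc_proj.2.1.append hv₁))
  obtain ⟨e, he, hev⟩ := hpred (rproj w₁) (rproj w₂ ++ v₁) ⟨b₀, hb₀, q', huv⟩ (hw₁ ▸ hout)
    (fun e he => huvff e (List.mem_append_left _ he)) (by simp only [List.length_append]; omega)
  exact huvff e (List.mem_append_right _ hev) he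

end LFSA

/-- concurrent-composition characterization of non-predictability. -/
theorem stmt7 {Q E A : Type*} [Fintype Q] (S : LFSA Q E A) (Ef : Set E) :
    ¬ S.Pred Ef ↔
      ∃ q0' ∈ ((S.Sn Ef).CC (S.Sn Ef)).Q0,
        ∃ (q1' : Q × Q) (s1' : List (Option E × Option E)),
          ((S.Sn Ef).CC (S.Sn Ef)).Run q0' s1' q1' ∧
          (∃ ef ∈ Ef, ∃ q : Q, S.δ q1'.1 ef q) ∧
          (S.Sn Ef).CycleReachableFrom q1'.2 :=
  ⟨LFSA.exists_cc_run_of_not_pred, LFSA.not_pred_of_exists_cc_run⟩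
end

section
/- An LFSA S is current-state opaque with respect to a set of secret states Q_S if and only if every nonempty reachable state x of the observer S_obs satisfies x ⊄ Q_S (i.e., x is not a subset of Q_S). -/
/-!
The observer state reached from `UR Q0` along an observation `σ` is exactly the current-state
estimate `M σ`: both are the states reachable from `Q0` along some run whose output is `σ`.
Current-state opacity says that every nonempty estimate contains a non-secret state, which is
the observer condition.
-/

namespace LFSA

variable {Q E A : Type*}

theorem Run.append_s8 {S : LFSA Q E A} {p q r : Q} {s t : List E}
    (hs : S.Run p s q) (ht : S.Run q t r) : S.Run p (s ++ t) r := by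
  induction hs with
  | nil => exact ht
  | cons hd _ ih => exact .cons hd (ih ht)

theorem run_append_iff {S : LFSA Q E A} {p r : Q} {s t : List E} :
    S.Run p (s ++ t) r ↔ ∃ q, S.Run p s q ∧ S.Run q t r := by
  refine ⟨fun h => ?_, fun ⟨_, hs, ht⟩ => hs.append_s8 ht⟩
  induction s generalizing p with
  | nil => exact ⟨p, .nil p, h⟩
  | cons e s ih =>
    obtain _ | ⟨hd, h⟩ := h
    obtain ⟨q, hs, ht⟩ := ih h
    exact ⟨q, .cons hd hs, ht⟩

@[simp]
theorem out_append (S : LFSA Q E A) (s t : List E) :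
    S.out (s ++ t) = S.out s ++ S.out t :=
  List.filterMap_append

def post (S : LFSA Q E A) (x : Set Q) (σ : List A) : Set Q :=
  {q | ∃ p ∈ x, ∃ s : List E, S.out s = σ ∧ S.Run p s q}

theorem UR_eq_post_nil (S : LFSA Q E A) (x : Set Q) : S.UR x = S.post x [] := rfl

theorem M_eq_post (S : LFSA Q E A) (σ : List A) : S.M σ = S.post S.Q0 σ := rfl

theorem post_post (S : LFSA Q E A) (x : Set Q) (σ τ : List A) :
    S.post (S.post x σ) τ = S.post x (σ ++ τ) := by
  ext r
  constructor
  · rintro ⟨q, ⟨p, hp, s, rfl, hs⟩, t, rfl, ht⟩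
    exact ⟨p, hp, s ++ t, out_append .., hs.append_s8 ht⟩
  · rintro ⟨p, hp, st, hst, hrun⟩
    obtain ⟨s, t, rfl, hs, ht⟩ := List.filterMap_eq_append_iff.mp hst
    obtain ⟨q, hs', ht'⟩ := run_append_iff.mp hrun
    exact ⟨q, ⟨p, hp, s, hs, hs'⟩, t, ht, ht'⟩

theorem obsStep_post_nil (S : LFSA Q E A) (x : Set Q) (a : A) :
    S.obsStep (S.post x []) a = S.post x [a] := by
  ext r
  constructor
  · rintro ⟨q, ⟨p, hp, u, hu, hrun⟩, e, q', hl, hd, _, rfl, v, hv, hv'⟩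
    refine ⟨p, hp, u ++ e :: v, ?_, hrun.append_s8 (.cons hd hv')⟩
    rw [out_append, hu, out, List.filterMap_cons_some hl, ← out, hv]
    rfl
  · rintro ⟨p, hp, s, hs, hrun⟩
    obtain ⟨u, e, v, rfl, hu, hl, hv⟩ := List.filterMap_eq_cons_iff.mp hs
    obtain ⟨q, hu', hrun⟩ := run_append_iff.mp hrun
    obtain _ | ⟨hd, hv'⟩ := hrun
    exact ⟨q, ⟨p, hp, u, List.filterMap_eq_nil_iff.mpr hu, hu'⟩, e, _, hl, hd, _, rfl, v, hv, hv'⟩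

theorem obsRun_post (S : LFSA Q E A) (x : Set Q) (σ τ : List A) :
    S.obsRun (S.post x τ) σ = S.post x (τ ++ σ) := by
  induction σ generalizing τ with
  | nil => simp [obsRun]
  | cons a σ ih =>
    have hstep : S.obsStep (S.post x τ) a = S.post x (τ ++ [a]) :=
      calc S.obsStep (S.post x τ) a = S.obsStep (S.post (S.post x τ) []) a := by
            rw [post_post, List.append_nil]
        _ = S.post x (τ ++ [a]) := by rw [obsStep_post_nil, post_post]
    simpa [obsRun, hstep] using ih (τ ++ [a])

theorem obsRun_UR_Q0 (S : LFSA Q E A) (σ : List A) : S.obsRun (S.UR S.Q0) σ = S.M σ := by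
  rw [UR_eq_post_nil, obsRun_post, List.nil_append, M_eq_post]

theorem cso_iff_forall_M_not_subset (S : LFSA Q E A) (QS : Set Q) :
    S.CSO QS ↔ ∀ σ : List A, (S.M σ).Nonempty → ¬ S.M σ ⊆ QS := by
  constructor
  · rintro h σ ⟨q, q0, hq0, s, rfl, hrun⟩ hsub
    obtain ⟨q0', hq0', s', q', hrun', hq', hout⟩ :=
      h q0 hq0 s q hrun (hsub ⟨q0, hq0, s, rfl, hrun⟩)
    exact hq' (hsub ⟨q0', hq0', s', hout.symm, hrun'⟩)
  · intro h q0 hq0 s q hrun _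
    obtain ⟨q', ⟨q0', hq0', s', hs', hrun'⟩, hq'⟩ :=
      Set.not_subset.mp (h (S.out s) ⟨q, q0, hq0, s, rfl, hrun⟩)
    exact ⟨q0', hq0', s', q', hrun', hq', hs'.symm⟩

end LFSA

/-- observer characterization of current-state opacity. -/
theorem stmt8 {Q E A : Type*} (S : LFSA Q E A) (QS : Set Q) :
    S.CSO QS ↔
      ∀ σ : List A, (S.obsRun (S.UR S.Q0) σ).Nonempty →
        ¬ (S.obsRun (S.UR S.Q0) σ ⊆ QS) := by
  simpa only [LFSA.obsRun_UR_Q0] using S.cso_iff_forall_M_not_subset QS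
end
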